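/- arXiv:1308.3641 — 4 statements merged into one kernel-verified Lean document; each statement's English description precedes it below -/
import Mathlib

section
/- Let G : ℝ^d → (nonempty convex compact subsets of ℝ^d) be relaxed one-sided Lipschitz with constant l < 0. For any y ∈ ℝ^d, any z with y ∈ G(z), and any x ∈ ℝ^d, there exists η ∈ G(x) with |z - x| ≤ -(1/l) |y - η|, and hence dist(S_G(y), x) ≤ -(1/l) dist(G(x), y), where S_G(y) = {z : y ∈ G(z)} and dist(B, x) = sup_{b ∈ B} |b - x|. -/
open scoped RealInnerProductSpace

/-- For an ROSL map `G` with negative constant `l`: any `z ∈ S_G(y)` and any `x` satisfy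
`‖z - x‖ ≤ -(1/l)·‖y - η‖` for some `η ∈ G x`, and hence
`dist(S_G(y), x) ≤ -(1/l)·dist(G(x), y)` (with `dist(B, x) = sup_{b ∈ B} ‖b - x‖`
and `dist(G(x), y) = sup_{η ∈ G(x)} ‖η - y‖`). -/
theorem rosl_distance_estimate
    {d : ℕ} (G : EuclideanSpace ℝ (Fin d) → Set (EuclideanSpace ℝ (Fin d)))
    (hG : ∀ x, (G x).Nonempty ∧ Convex ℝ (G x) ∧ IsCompact (G x))
    (l : ℝ) (hl : l < 0)
    (hROSL : ∀ x x', ∀ y ∈ G x, ∃ y' ∈ G x', ⟪y - y', x - x'⟫ ≤ l * ‖x - x'‖ ^ 2)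
    (y x z : EuclideanSpace ℝ (Fin d)) (hz : y ∈ G z) :
    (∃ η ∈ G x, ‖z - x‖ ≤ -(1 / l) * ‖y - η‖) ∧
      ‖z - x‖ ≤ -(1 / l) * sSup ((fun η => ‖η - y‖) '' G x) := by
  obtain ⟨η, hη, hineq⟩ := hROSL z x y hz
  have hpos : 0 < -(1 / l) := by
    rw [neg_pos]; exact div_neg_of_pos_of_neg one_pos hl
  have key : ‖z - x‖ ≤ -(1 / l) * ‖y - η‖ := by
    rcases eq_or_ne z x with rfl | hne
    · simp only [sub_self, norm_zero]
      exact mul_nonneg hpos.le (norm_nonneg _)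
    · have hzx : 0 < ‖z - x‖ := by
        simpa [sub_eq_zero] using hne
      have h1 : -(l * ‖z - x‖ ^ 2) ≤ ‖y - η‖ * ‖z - x‖ := by
        have h2 : -(‖y - η‖ * ‖z - x‖) ≤ ⟪y - η, z - x⟫ := by
          have := abs_real_inner_le_norm (y - η) (z - x)
          linarith [neg_abs_le (⟪y - η, z - x⟫ : ℝ)]
        linarith
      have h3 : -l * ‖z - x‖ ≤ ‖y - η‖ := by
        have := (div_le_div_iff_of_pos_right hzx).mpr h1
        nlinarith
      have h4 : -(1 / l) * (-l * ‖z - x‖) = ‖z - x‖ := by field_simp; exact div_self hl.ne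
      have h5 := mul_le_mul_of_nonneg_left h3 hpos.le
      linarith
  refine ⟨⟨η, hη, key⟩, ?_⟩
  have hbdd : BddAbove ((fun η => ‖η - y‖) '' G x) :=
    (((hG x).2.2).image (by continuity)).bddAbove
  have hle : ‖y - η‖ ≤ sSup ((fun η => ‖η - y‖) '' G x) := by
    have : ‖η - y‖ ∈ (fun η => ‖η - y‖) '' G x := ⟨η, hη, rfl⟩
    calc ‖y - η‖ = ‖η - y‖ := by rw [norm_sub_rev]
      _ ≤ _ := le_csSup hbdd this
  calc ‖z - x‖ ≤ -(1 / l) * ‖y - η‖ := key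
    _ ≤ -(1 / l) * sSup ((fun η => ‖η - y‖) '' G x) := by
        apply mul_le_mul_of_nonneg_left hle
        exact hpos.le
end

section
/- Let G : ℝ^d → (nonempty convex compact subsets of ℝ^d) be upper semicontinuous and relaxed one-sided Lipschitz with constant l < 0. Then for every y ∈ ℝ^d the set S_G(y) = {z ∈ ℝ^d : y ∈ G(z)} satisfies diam S_G(y) ≤ -(1/l) · sup_{x ∈ S_G(y)} diam G(x). -/
/-!
If `y` lies in both `G x` and `G x'`, the ROSL condition supplies `y' ∈ G x'` with
`-l ‖x - x'‖² ≤ ⟪y' - y, x - x'⟫ ≤ diam (G x') · ‖x - x'‖`, so `‖x - x'‖ ≤ diam (G x') / -l`.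
Upper semicontinuity with bounded values makes `G` bounded on the compact set `S_G(y)`; this is
needed because `⨆` of an unbounded family of reals is `0`.
-/

open scoped RealInnerProductSpace

/-- `G` is upper semicontinuous as a set-valued map: for every open set `U` containing
`G x`, the inclusion `G x' ⊆ U` holds for all `x'` near `x`. -/
def SetValuedUSC {d : ℕ}
    (G : EuclideanSpace ℝ (Fin d) → Set (EuclideanSpace ℝ (Fin d))) : Prop :=
  ∀ x, ∀ U : Set (EuclideanSpace ℝ (Fin d)), IsOpen U → G x ⊆ U →
    ∀ᶠ x' in nhds x, G x' ⊆ U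

open Bornology Metric Set Filter Topology

section UpperSemicontinuous

variable {X Y : Type*} [TopologicalSpace X] [PseudoMetricSpace Y] {G : X → Set Y}

theorem isBounded_biUnion_of_isCompact_of_usc (hG : ∀ x, IsBounded (G x))
    (husc : ∀ x, ∀ U : Set Y, IsOpen U → G x ⊆ U → ∀ᶠ x' in 𝓝 x, G x' ⊆ U)
    {K : Set X} (hK : IsCompact K) : IsBounded (⋃ x ∈ K, G x) := by
  refine hK.induction_on (p := fun s => IsBounded (⋃ x ∈ s, G x)) (by simp)
    (fun s t hst ht => ht.subset (biUnion_mono hst fun _ _ => subset_rfl))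
    (fun s t hs ht => by simpa only [biUnion_union] using hs.union ht) fun x _ => ?_
  have hnear : ∀ᶠ x' in 𝓝 x, G x' ⊆ thickening 1 (G x) :=
    husc x _ isOpen_thickening (self_subset_thickening one_pos _)
  exact ⟨{x' | G x' ⊆ thickening 1 (G x)}, mem_nhdsWithin_of_mem_nhds hnear,
    (hG x).thickening.subset (iUnion₂_subset fun _ h => h)⟩

theorem bddAbove_diam_of_isCompact_of_usc (hG : ∀ x, IsBounded (G x))
    (husc : ∀ x, ∀ U : Set Y, IsOpen U → G x ⊆ U → ∀ᶠ x' in 𝓝 x, G x' ⊆ U)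
    {K : Set X} (hK : IsCompact K) : BddAbove (range fun x : K => diam (G x)) := by
  refine ⟨diam (⋃ x ∈ K, G x), ?_⟩
  rintro _ ⟨x, rfl⟩
  exact diam_mono (subset_biUnion_of_mem x.2) (isBounded_biUnion_of_isCompact_of_usc hG husc hK)

end UpperSemicontinuous

theorem neg_mul_norm_sub_le_of_inner_le {E : Type*} [NormedAddCommGroup E] [InnerProductSpace ℝ E]
    {l : ℝ} {x x' y y' : E} (h : ⟪y - y', x - x'⟫ ≤ l * ‖x - x'‖ ^ 2) :
    -l * ‖x - x'‖ ≤ ‖y - y'‖ := by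
  rcases (norm_nonneg (x - x')).eq_or_lt with hx | hx
  · simp [← hx]
  have hCS : -⟪y - y', x - x'⟫ ≤ ‖y - y'‖ * ‖x - x'‖ :=
    (neg_le_abs _).trans (abs_real_inner_le_norm _ _)
  exact le_of_mul_le_mul_right (by nlinarith) hx

theorem rosl_diam_solution_set_general
    {d : ℕ} (G : EuclideanSpace ℝ (Fin d) → Set (EuclideanSpace ℝ (Fin d)))
    (hG : ∀ x, (G x).Nonempty ∧ Convex ℝ (G x) ∧ IsCompact (G x))
    (husc : SetValuedUSC G)
    (l : ℝ) (hl : l < 0)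
    (hROSL : ∀ x x', ∀ y ∈ G x, ∃ y' ∈ G x', ⟪y - y', x - x'⟫ ≤ l * ‖x - x'‖ ^ 2)
    (y : EuclideanSpace ℝ (Fin d))
    (hScp : IsCompact {z | y ∈ G z}) :
    Metric.diam {z | y ∈ G z} ≤
      -(1 / l) * ⨆ x : {z | y ∈ G z}, Metric.diam (G x) := by
  set S := {z | y ∈ G z}
  set C := ⨆ x : S, diam (G x)
  have hbdd : ∀ x, IsBounded (G x) := fun x => (hG x).2.2.isBounded
  have hdiam_le : ∀ x ∈ S, diam (G x) ≤ C := fun x hx =>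
    le_ciSup (bddAbove_diam_of_isCompact_of_usc hbdd husc hScp) ⟨x, hx⟩
  have hneg : 0 < -l := neg_pos.2 hl
  have hC : 0 ≤ -(1 / l) * C :=
    mul_nonneg (by rw [one_div, neg_nonneg]; exact inv_nonpos.2 hl.le)
      (Real.iSup_nonneg fun _ => diam_nonneg)
  refine diam_le_of_forall_dist_le hC fun x hx x' hx' => ?_
  obtain ⟨y', hy', hineq⟩ := hROSL x x' y hx
  calc dist x x' = ‖x - x'‖ := dist_eq_norm x x'
    _ ≤ ‖y - y'‖ / -l := (le_div_iff₀' hneg).2 (neg_mul_norm_sub_le_of_inner_le hineq)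
    _ ≤ C / -l := by
        gcongr
        rw [← dist_eq_norm]
        exact (dist_le_diam_of_mem (hbdd x') hx' hy').trans (hdiam_le x' hx')
    _ = -(1 / l) * C := by field_simp

/-- Diameter estimate for the solution set `S_G(y) = {z : y ∈ G z}` of an upper
semicontinuous ROSL map `G` with negative constant `l`:
`diam S_G(y) ≤ -(1/l) · sup_{x ∈ S_G(y)} diam G(x)`. -/
theorem rosl_diam_solution_set
    {d : ℕ} (G : EuclideanSpace ℝ (Fin d) → Set (EuclideanSpace ℝ (Fin d)))
    (hG : ∀ x, (G x).Nonempty ∧ Convex ℝ (G x) ∧ IsCompact (G x))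
    (husc : SetValuedUSC G)
    (l : ℝ) (hl : l < 0)
    (hROSL : ∀ x x', ∀ y ∈ G x, ∃ y' ∈ G x', ⟪y - y', x - x'⟫ ≤ l * ‖x - x'‖ ^ 2)
    (y : EuclideanSpace ℝ (Fin d))
    (hSne : {z | y ∈ G z}.Nonempty) (hScp : IsCompact {z | y ∈ G z}) :
    Metric.diam {z | y ∈ G z} ≤
      -(1 / l) * ⨆ x : {z | y ∈ G z}, Metric.diam (G x) :=
  rosl_diam_solution_set_general G hG husc l hl hROSL y hScp
end

section
/- Let f : ℝ^d → ℝ^d be one-sided Lipschitz with constant l_f, let h > 0 with l_f h < 1, and fix x ∈ ℝ^d. Suppose for each m in a set M ⊆ ℝ^d there is a (necessarily unique) solution z(m) of z = x + h f(z) + h m. Then the map m ↦ z(m) is Lipschitz on M with constant h/(1 - l_f h), i.e. |z(m) - z(m')| ≤ (h/(1 - l_f h))|m - m'| for all m, m' ∈ M. -/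
open scoped RealInnerProductSpace

/-!
Subtracting the implicit equations for `m` and `m'` gives `Δ = h (f z - f z') + h (m - m')` for
`Δ = z - z'`. Pairing with `Δ` and using the one-sided Lipschitz bound on the first term and
Cauchy–Schwarz on the second yields `‖Δ‖² ≤ l h ‖Δ‖² + h ‖m - m'‖ ‖Δ‖`, so
`(1 - l h) ‖Δ‖ ≤ h ‖m - m'‖`, and `1 - l h > 0` lets us divide.
-/

variable {E : Type*} [NormedAddCommGroup E] [InnerProductSpace ℝ E]

def OneSidedLipschitzWith (l : ℝ) (f : E → E) : Prop :=
  ∀ u v, ⟪f u - f v, u - v⟫ ≤ l * ‖u - v‖ ^ 2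

lemma mul_le_of_mul_sq_le_mul {a b c : ℝ} (ha : 0 ≤ a) (hb : 0 ≤ b) (h : c * a ^ 2 ≤ b * a) :
    c * a ≤ b := by
  rcases ha.eq_or_lt with rfl | ha
  · simpa using hb
  · exact le_of_mul_le_mul_right (by nlinarith) ha

namespace OneSidedLipschitzWith

variable {f : E → E} {l h : ℝ} {x m m' z z' : E}

lemma norm_sub_sq_le_of_implicit (hf : OneSidedLipschitzWith l f) (hh : 0 ≤ h)
    (hz : z = x + h • f z + h • m) (hz' : z' = x + h • f z' + h • m') :
    (1 - l * h) * ‖z - z'‖ ^ 2 ≤ h * ‖m - m'‖ * ‖z - z'‖ := by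
  have hdiff : z - z' = h • (f z - f z') + h • (m - m') := by
    nth_rewrite 1 [hz, hz']
    module
  have hinner : ‖z - z'‖ ^ 2 = h * ⟪f z - f z', z - z'⟫ + h * ⟪m - m', z - z'⟫ := by
    rw [← real_inner_self_eq_norm_sq]
    nth_rewrite 1 [hdiff]
    rw [inner_add_left, real_inner_smul_left, real_inner_smul_left]
  have hosl := mul_le_mul_of_nonneg_left (hf z z') hh
  have hcs := mul_le_mul_of_nonneg_left (real_inner_le_norm (m - m') (z - z')) hh
  linarith

lemma one_sub_mul_norm_sub_le_of_implicit (hf : OneSidedLipschitzWith l f) (hh : 0 ≤ h)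
    (hz : z = x + h • f z + h • m) (hz' : z' = x + h • f z' + h • m') :
    (1 - l * h) * ‖z - z'‖ ≤ h * ‖m - m'‖ :=
  mul_le_of_mul_sq_le_mul (norm_nonneg _) (by positivity) (hf.norm_sub_sq_le_of_implicit hh hz hz')

end OneSidedLipschitzWith

/-- The solution `z(m)` of the implicit equation `z = x + h f(z) + h m` depends
Lipschitz-continuously on `m`, with Lipschitz constant `h/(1 - l_f h)`. -/
theorem implicit_solution_lipschitz
    {d : ℕ} (f : EuclideanSpace ℝ (Fin d) → EuclideanSpace ℝ (Fin d))
    (lf : ℝ)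
    (hOSL : ∀ u v, ⟪f u - f v, u - v⟫ ≤ lf * ‖u - v‖ ^ 2)
    (h : ℝ) (hh : 0 < h) (hlh : lf * h < 1)
    (x : EuclideanSpace ℝ (Fin d))
    (M : Set (EuclideanSpace ℝ (Fin d)))
    (z : EuclideanSpace ℝ (Fin d) → EuclideanSpace ℝ (Fin d))
    (hz : ∀ m ∈ M, z m = x + h • f (z m) + h • m) :
    ∀ m ∈ M, ∀ m' ∈ M, ‖z m - z m'‖ ≤ (h / (1 - lf * h)) * ‖m - m'‖ := by
  intro m hm m' hm'
  have hbound : (1 - lf * h) * ‖z m - z m'‖ ≤ h * ‖m - m'‖ :=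
    OneSidedLipschitzWith.one_sub_mul_norm_sub_le_of_implicit (f := f) hOSL hh.le (hz m hm)
      (hz m' hm')
  rw [div_mul_eq_mul_div, le_div_iff₀ (by linarith)]
  linarith
end

section
/- Let f : ℝ → ℝ be continuous and one-sided Lipschitz with constant l_f, let M : ℝ → (nonempty compact intervals of ℝ) and let h > 0 with l_f h < 1. Then for fixed x ∈ ℝ, the set Φ = {z ∈ ℝ : z ∈ x + h f(z) + h M(x)} is a nonempty compact interval (in particular convex). -/
/-!
With `F z = z - h f z`, the set `Φ` is the preimage of the interval `x + h M(x)` under `F`.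
The one-sided Lipschitz bound makes `z ↦ l_f z - f z` monotone, so
`F z = (1 - l_f h) z + h (l_f z - f z)` is a positive multiple of the identity plus a
continuous monotone function: a strictly increasing continuous surjection of `ℝ`. Preimages
of compact intervals under such a map are compact intervals.
-/

open Set Filter Function

theorem monotone_mul_sub_of_one_sided_lipschitz {f : ℝ → ℝ} {l : ℝ}
    (hf : ∀ z z', (f z - f z') * (z - z') ≤ l * (z - z') ^ 2) :
    Monotone fun z => l * z - f z := by
  intro z z' hzz'
  rcases hzz'.eq_or_lt with rfl | hlt
  · rfl
  · have hprod : (f z' - f z) * (z' - z) ≤ (l * (z' - z)) * (z' - z) := by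
      simpa [sq, mul_assoc] using hf z' z
    have hslope := le_of_mul_le_mul_right hprod (sub_pos.mpr hlt)
    show l * z - f z ≤ l * z' - f z'
    linarith

theorem surjective_mul_add_of_monotone {c : ℝ} (hc : 0 < c) {φ : ℝ → ℝ} (hφ : Monotone φ)
    (hφc : Continuous φ) : Surjective fun z => c * z + φ z :=
  (continuous_const.mul continuous_id).add hφc |>.surjective
    (tendsto_atTop_add_right_of_le' _ (φ 0) (tendsto_id.const_mul_atTop hc)
      (eventually_ge_atTop 0 |>.mono fun _ hz => hφ hz))
    (tendsto_atBot_add_right_of_ge' _ (φ 0) (tendsto_id.const_mul_atBot hc)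
      (eventually_le_atBot 0 |>.mono fun _ hz => hφ hz))

theorem StrictMono.exists_preimage_Icc_eq_Icc {α β : Type*} [LinearOrder α] [Preorder β]
    {g : α → β} (hg : StrictMono g) (hs : Surjective g) {a b : β} (hab : a ≤ b) :
    ∃ u v, u ≤ v ∧ g ⁻¹' Icc a b = Icc u v :=
  let e := hg.orderIsoOfSurjective g hs
  ⟨e.symm a, e.symm b, e.symm.monotone hab, e.preimage_Icc a b⟩

/-- In dimension one, the image of the parameterized semi-implicit Euler step
`Φ = {z : z ∈ x + h f(z) + h M(x)}` is a nonempty compact interval (in particular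
convex), provided `f` is continuous and one-sided Lipschitz with `l_f h < 1` and the
values of `M` are nonempty compact intervals. -/
theorem semi_implicit_image_interval
    (f : ℝ → ℝ) (hfc : Continuous f) (lf : ℝ)
    (hOSL : ∀ z z', (f z - f z') * (z - z') ≤ lf * (z - z') ^ 2)
    (M : ℝ → Set ℝ)
    (hM : ∀ x, ∃ a b : ℝ, a ≤ b ∧ M x = Set.Icc a b)
    (h : ℝ) (hh : 0 < h) (hlh : lf * h < 1) (x : ℝ) :
    ∃ a b : ℝ, a ≤ b ∧
      {z : ℝ | ∃ m ∈ M x, z = x + h * f z + h * m} = Set.Icc a b := by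
  obtain ⟨a, b, hab, hMx⟩ := hM x
  set F : ℝ → ℝ := fun z => (1 - lf * h) * z + h * (lf * z - f z)
  have hφ : Monotone fun z => h * (lf * z - f z) :=
    (monotone_mul_sub_of_one_sided_lipschitz hOSL).const_mul hh.le
  have hF : StrictMono F := (strictMono_mul_left_of_pos (by linarith)).add_monotone hφ
  have hFs : Surjective F := surjective_mul_add_of_monotone (by linarith) hφ (by fun_prop)
  have hΦ : {z | ∃ m ∈ M x, z = x + h * f z + h * m} = F ⁻¹' Icc (h * a + x) (h * b + x) := by
    rw [hMx, ← image_affine_Icc' hh]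
    ext z
    refine exists_congr fun m => and_congr_right fun _ => ?_
    constructor <;> intro hz <;> simp only [F] at * <;> linarith
  exact hΦ ▸ hF.exists_preimage_Icc_eq_Icc hFs (by gcongr)
end
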